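/- arXiv:hep-th/9507123 — 4 statements merged into one kernel-verified Lean document; each statement's English description precedes it below -/
import Mathlib

section
/- The rational R-operator R(ξ)f(z₁,z₂) = (1/z₁₂ − 1/μ)·f(z₁,z₂) − (1/z₁₂ − 1/ξ)·f(z₂,z₁), with z₁₂ = z₁−z₂ and fixed parameter μ, satisfies the Yang–Baxter equation R₁₂(ξ₁−ξ₂)R₁₃(ξ₁−ξ₃)R₂₃(ξ₂−ξ₃) = R₂₃(ξ₂−ξ₃)R₁₃(ξ₁−ξ₃)R₁₂(ξ₁−ξ₂) as operators on functions of three variables, where R_{ij} acts on variables z_i, z_j. -/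
open Complex

set_option maxHeartbeats 1600000

/-- Rational R-operator acting on variables 1,2 of a function of three variables. -/
noncomputable def Rrat12 (μ ξ : ℂ) (f : ℂ → ℂ → ℂ → ℂ) : ℂ → ℂ → ℂ → ℂ :=
  fun z1 z2 z3 => (1 / (z1 - z2) - 1 / μ) * f z1 z2 z3 - (1 / (z1 - z2) - 1 / ξ) * f z2 z1 z3

/-- Rational R-operator acting on variables 1,3. -/
noncomputable def Rrat13 (μ ξ : ℂ) (f : ℂ → ℂ → ℂ → ℂ) : ℂ → ℂ → ℂ → ℂ :=
  fun z1 z2 z3 => (1 / (z1 - z3) - 1 / μ) * f z1 z2 z3 - (1 / (z1 - z3) - 1 / ξ) * f z3 z2 z1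

/-- Rational R-operator acting on variables 2,3. -/
noncomputable def Rrat23 (μ ξ : ℂ) (f : ℂ → ℂ → ℂ → ℂ) : ℂ → ℂ → ℂ → ℂ :=
  fun z1 z2 z3 => (1 / (z2 - z3) - 1 / μ) * f z1 z2 z3 - (1 / (z2 - z3) - 1 / ξ) * f z1 z3 z2

set_option maxHeartbeats 1000000 in
/-- the rational R-operator satisfies the Yang–Baxter equation
R₁₂(ξ₁−ξ₂)R₁₃(ξ₁−ξ₃)R₂₃(ξ₂−ξ₃) = R₂₃(ξ₂−ξ₃)R₁₃(ξ₁−ξ₃)R₁₂(ξ₁−ξ₂), pointwise where all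
denominators are nonzero. -/
theorem rational_YBE (μ ξ1 ξ2 ξ3 : ℂ) (hμ : μ ≠ 0)
    (h12 : ξ1 - ξ2 ≠ 0) (h13 : ξ1 - ξ3 ≠ 0) (h23 : ξ2 - ξ3 ≠ 0)
    (f : ℂ → ℂ → ℂ → ℂ) (z1 z2 z3 : ℂ)
    (hz12 : z1 ≠ z2) (hz13 : z1 ≠ z3) (hz23 : z2 ≠ z3) :
    Rrat12 μ (ξ1 - ξ2) (Rrat13 μ (ξ1 - ξ3) (Rrat23 μ (ξ2 - ξ3) f)) z1 z2 z3 =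
    Rrat23 μ (ξ2 - ξ3) (Rrat13 μ (ξ1 - ξ3) (Rrat12 μ (ξ1 - ξ2) f)) z1 z2 z3 := by
  have hz12' : z1 - z2 ≠ 0 := sub_ne_zero.mpr hz12
  have hz13' : z1 - z3 ≠ 0 := sub_ne_zero.mpr hz13
  have hz23' : z2 - z3 ≠ 0 := sub_ne_zero.mpr hz23
  have hb : 1/(z1-z2) * (1/(z1-z3)) + 1/(z1-z3) * (1/(z2-z3)) =
      1/(z1-z2) * (1/(z2-z3)) := by
    field_simp
    ring
  have hq : 1/(ξ1-ξ2) * (1/(ξ1-ξ3)) + 1/(ξ1-ξ3) * (1/(ξ2-ξ3)) =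
      1/(ξ1-ξ2) * (1/(ξ2-ξ3)) := by
    field_simp
    ring
  simp only [Rrat12, Rrat13, Rrat23]
  rw [show z2 - z1 = -(z1 - z2) from by ring, show z3 - z2 = -(z2 - z3) from by ring]
  simp only [div_neg]
  linear_combination ((1/(z2-z3)-1/μ) * f z2 z3 z1 - (1/(z1-z2)-1/μ) * f z3 z1 z2 +
    (1/(z1-z2)-1/(z2-z3)) * f z3 z2 z1) * (hb - hq)
end

section
/- The trigonometric R-operator R(ξ)f(z₁,z₂) = (cot z₁₂ − cot μ)·f(z₁,z₂) − (cot z₁₂ − cot ξ)·f(z₂,z₁) satisfies the Yang–Baxter equation R₁₂(ξ₁₂)R₁₃(ξ₁₃)R₂₃(ξ₂₃) = R₂₃(ξ₂₃)R₁₃(ξ₁₃)R₁₂(ξ₁₂), where ξ_{ij} = ξ_i − ξ_j. -/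
open Complex

/-- Complex cotangent. -/
noncomputable def ccot (z : ℂ) : ℂ := Complex.cos z / Complex.sin z

/-- Trigonometric R-operator acting on variables 1,2 of a function of three variables. -/
noncomputable def Rtrig12 (μ ξ : ℂ) (f : ℂ → ℂ → ℂ → ℂ) : ℂ → ℂ → ℂ → ℂ :=
  fun z1 z2 z3 => (ccot (z1 - z2) - ccot μ) * f z1 z2 z3 - (ccot (z1 - z2) - ccot ξ) * f z2 z1 z3

/-- Trigonometric R-operator acting on variables 1,3. -/
noncomputable def Rtrig13 (μ ξ : ℂ) (f : ℂ → ℂ → ℂ → ℂ) : ℂ → ℂ → ℂ → ℂ :=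
  fun z1 z2 z3 => (ccot (z1 - z3) - ccot μ) * f z1 z2 z3 - (ccot (z1 - z3) - ccot ξ) * f z3 z2 z1

/-- Trigonometric R-operator acting on variables 2,3. -/
noncomputable def Rtrig23 (μ ξ : ℂ) (f : ℂ → ℂ → ℂ → ℂ) : ℂ → ℂ → ℂ → ℂ :=
  fun z1 z2 z3 => (ccot (z2 - z3) - ccot μ) * f z1 z2 z3 - (ccot (z2 - z3) - ccot ξ) * f z1 z3 z2

private lemma ccot_neg' (w : ℂ) : ccot (-w) = -ccot w := by
  simp [ccot, Complex.sin_neg, Complex.cos_neg, div_neg, neg_div]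

private lemma ccot_sum_ne (u v : ℂ) (hu : Complex.sin u ≠ 0) (hv : Complex.sin v ≠ 0)
    (huv : Complex.sin (u + v) ≠ 0) : ccot u + ccot v ≠ 0 := by
  have : ccot u + ccot v = Complex.sin (u + v) / (Complex.sin u * Complex.sin v) := by
    rw [Complex.sin_add]; simp only [ccot]; field_simp; ring
  rw [this]
  exact div_ne_zero huv (mul_ne_zero hu hv)

private lemma ccot_add (u v : ℂ) (hu : Complex.sin u ≠ 0) (hv : Complex.sin v ≠ 0)
    (huv : Complex.sin (u + v) ≠ 0) :
    ccot (u + v) = (ccot u * ccot v - 1) / (ccot u + ccot v) := by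
  have hs := ccot_sum_ne u v hu hv huv
  rw [eq_div_iff hs]
  simp only [ccot] at *
  field_simp
  rw [Complex.sin_add, Complex.cos_add]
  ring

set_option maxHeartbeats 1000000 in
/-- the trigonometric R-operator satisfies the Yang–Baxter equation
R₁₂(ξ₁₂)R₁₃(ξ₁₃)R₂₃(ξ₂₃) = R₂₃(ξ₂₃)R₁₃(ξ₁₃)R₁₂(ξ₁₂), pointwise where all
cotangents are defined. -/
theorem trigonometric_YBE (μ ξ1 ξ2 ξ3 : ℂ) (hμ : Complex.sin μ ≠ 0)
    (h12 : Complex.sin (ξ1 - ξ2) ≠ 0) (h13 : Complex.sin (ξ1 - ξ3) ≠ 0)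
    (h23 : Complex.sin (ξ2 - ξ3) ≠ 0)
    (f : ℂ → ℂ → ℂ → ℂ) (z1 z2 z3 : ℂ)
    (hz12 : Complex.sin (z1 - z2) ≠ 0) (hz13 : Complex.sin (z1 - z3) ≠ 0)
    (hz23 : Complex.sin (z2 - z3) ≠ 0) :
    Rtrig12 μ (ξ1 - ξ2) (Rtrig13 μ (ξ1 - ξ3) (Rtrig23 μ (ξ2 - ξ3) f)) z1 z2 z3 =
    Rtrig23 μ (ξ2 - ξ3) (Rtrig13 μ (ξ1 - ξ3) (Rtrig12 μ (ξ1 - ξ2) f)) z1 z2 z3 := by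
  have hz13' : Complex.sin ((z1 - z2) + (z2 - z3)) ≠ 0 := by
    rwa [show (z1 - z2) + (z2 - z3) = z1 - z3 by ring]
  have h13' : Complex.sin ((ξ1 - ξ2) + (ξ2 - ξ3)) ≠ 0 := by
    rwa [show (ξ1 - ξ2) + (ξ2 - ξ3) = ξ1 - ξ3 by ring]
  have hac := ccot_sum_ne _ _ hz12 hz23 hz13'
  have hxz := ccot_sum_ne _ _ h12 h23 h13'
  have e21 : ccot (z2 - z1) = -ccot (z1 - z2) := by
    rw [show z2 - z1 = -(z1 - z2) by ring, ccot_neg']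
  have e31 : ccot (z3 - z1) = -ccot (z1 - z3) := by
    rw [show z3 - z1 = -(z1 - z3) by ring, ccot_neg']
  have e32 : ccot (z3 - z2) = -ccot (z2 - z3) := by
    rw [show z3 - z2 = -(z2 - z3) by ring, ccot_neg']
  set a := ccot (z1 - z2) with ha
  set b := ccot (z1 - z3) with hbdef
  set c := ccot (z2 - z3) with hc
  set x := ccot (ξ1 - ξ2) with hx
  set y := ccot (ξ2 - ξ3) with hy
  set w := ccot (ξ1 - ξ3) with hwdef
  set m := ccot μ with hm
  have hb : b * (a + c) = a * c - 1 := by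
    rw [hbdef, show z1 - z3 = (z1 - z2) + (z2 - z3) by ring,
      ccot_add _ _ hz12 hz23 hz13', div_mul_cancel₀]
    exact hac
  have hw : w * (x + y) = x * y - 1 := by
    rw [hwdef, show ξ1 - ξ3 = (ξ1 - ξ2) + (ξ2 - ξ3) by ring,
      ccot_add _ _ h12 h23 h13', div_mul_cancel₀]
    exact hxz
  simp only [Rtrig12, Rtrig13, Rtrig23, e21, e31, e32]
  refine mul_left_cancel₀ (mul_ne_zero hac hxz) ?_
  linear_combination ((x + y) * (a + c) *
    ((m - a) * f z3 z1 z2 + (c - m) * f z2 z3 z1 + (a - c) * f z3 z2 z1)) * (hb - hw)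
end

section
/- If f : ℂ → ℂ is entire with f(z+1) = f(z) and f(z+τ) = e^{−2πikz − πikτ}f(z), then the space V_k of all such functions has dimension k, spanned by the theta functions θ_a(z) = Σ_{n∈ℤ} exp(πin²τ/k + 2πin(z − a/k)) for a ∈ ℤ/kℤ. -/
open Complex

/-- The space `V_k` of entire functions with `f(z+1) = f(z)` and
`f(z+τ) = e^{−2πikz − πikτ} f(z)`, as a submodule of `ℂ → ℂ`. -/
noncomputable def Vk (τ : ℂ) (k : ℕ) : Submodule ℂ (ℂ → ℂ) where
  carrier := {f | Differentiable ℂ f ∧ (∀ z, f (z + 1) = f z) ∧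
    ∀ z, f (z + τ) =
      Complex.exp (-2 * Real.pi * I * k * z - Real.pi * I * k * τ) * f z}
  zero_mem' := ⟨differentiable_const 0, fun _ => rfl, fun z => by simp⟩
  add_mem' := by
    rintro f g ⟨hf1, hf2, hf3⟩ ⟨hg1, hg2, hg3⟩
    exact ⟨hf1.add hg1, fun z => by simp [Pi.add_apply, hf2 z, hg2 z],
      fun z => by simp only [Pi.add_apply, hf3 z, hg3 z]; ring⟩
  smul_mem' := by
    rintro c f ⟨hf1, hf2, hf3⟩
    exact ⟨hf1.const_smul c, fun z => by simp [Pi.smul_apply, hf2 z],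
      fun z => by simp only [Pi.smul_apply, hf3 z, smul_eq_mul]; ring⟩

/-- The theta functions `θ_a(z) = Σ_{n∈ℤ} exp(πin²τ/k + 2πin(z − a/k))` for `a ∈ ℤ/kℤ`. -/
noncomputable def thetaA (τ : ℂ) (k : ℕ) (a : ZMod k) (z : ℂ) : ℂ :=
  ∑' n : ℤ, Complex.exp (Real.pi * I * (n : ℂ) ^ 2 * τ / k +
    2 * Real.pi * I * (n : ℂ) * (z - (a.val : ℂ) / k))

/-! ### Auxiliary development -/

open intervalIntegral MeasureTheory Filter

section Theta

lemma thetaA_eq (τ : ℂ) (k : ℕ) (a : ZMod k) (z : ℂ) :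
    thetaA τ k a z = jacobiTheta₂ (z - (a.val : ℂ) / k) (τ / k) := by
  refine tsum_congr fun n => ?_
  rw [jacobiTheta₂_term]; congr 1; ring

lemma im_div_k {τ : ℂ} (hτ : 0 < τ.im) {k : ℕ} (hk : 0 < k) : 0 < (τ / (k:ℂ)).im := by
  have : (τ / (k:ℂ)) = ((k:ℝ)⁻¹ : ℝ) * τ := by push_cast; field_simp
  rw [this, Complex.im_ofReal_mul]
  positivity

lemma jacobiTheta₂_add_nat_mul (m : ℕ) (z τ' : ℂ) :
    jacobiTheta₂ (z + m * τ') τ' =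
      cexp (-Real.pi * I * ((m:ℂ)^2 * τ' + 2 * m * z)) * jacobiTheta₂ z τ' := by
  induction m generalizing z with
  | zero => simp
  | succ m ih =>
    have h1 : z + ((m:ℂ)+1) * τ' = (z + τ') + m * τ' := by ring
    push_cast
    rw [h1, ih (z + τ'), jacobiTheta₂_add_left', ← mul_assoc, ← Complex.exp_add]
    congr 1; ring

lemma thetaA_differentiable {τ : ℂ} (hτ : 0 < τ.im) {k : ℕ} (hk : 0 < k) (a : ZMod k) :
    Differentiable ℂ (thetaA τ k a) := by
  intro z
  have h := (differentiableAt_jacobiTheta₂_fst (z - (a.val : ℂ) / k) (im_div_k hτ hk)).comp z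
    ((differentiable_id.sub_const ((a.val : ℂ) / k)) z)
  exact h.congr_of_eventuallyEq (Filter.Eventually.of_forall fun w => thetaA_eq τ k a w)

lemma thetaA_periodic (τ : ℂ) (k : ℕ) (a : ZMod k) (z : ℂ) :
    thetaA τ k a (z + 1) = thetaA τ k a z := by
  rw [thetaA_eq, thetaA_eq, show z + 1 - (a.val : ℂ) / k = z - (a.val : ℂ) / k + 1 by ring,
    jacobiTheta₂_add_left]

lemma thetaA_quasiperiodic {τ : ℂ} {k : ℕ} (hk : 0 < k) (a : ZMod k) (z : ℂ) :
    thetaA τ k a (z + τ) =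
      Complex.exp (-2 * Real.pi * I * k * z - Real.pi * I * k * τ) * thetaA τ k a z := by
  have hk' : (k : ℂ) ≠ 0 := Nat.cast_ne_zero.mpr hk.ne'
  rw [thetaA_eq, thetaA_eq,
    show z + τ - (a.val : ℂ) / k = (z - (a.val : ℂ) / k) + (k : ℕ) * (τ / k) by field_simp; ring,
    jacobiTheta₂_add_nat_mul]
  congr 1
  have h0 : (-Real.pi : ℂ) * I * ((k:ℂ)^2 * (τ/k) + 2 * k * (z - (a.val : ℂ)/k)) =
      (-2 * Real.pi * I * k * z - Real.pi * I * k * τ) + (a.val : ℂ) * (2 * Real.pi * I) := by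
    field_simp; ring
  have h1 : Complex.exp ((a.val : ℂ) * (2 * Real.pi * I)) = 1 := by
    have h2 := Complex.exp_int_mul_two_pi_mul_I (a.val : ℤ)
    push_cast at h2 ⊢
    exact h2
  rw [h0, Complex.exp_add, h1, mul_one]

end Theta

section FourierCoefficientsOnLine

/-- `n`-th Fourier coefficient of `f` along the segment `[0, 1]`. -/
noncomputable def fc (f : ℂ → ℂ) (n : ℤ) : ℂ :=
  ∫ x in (0:ℝ)..1, f x * Complex.exp (-2 * Real.pi * I * n * x)

lemma shift_vert (g : ℂ → ℂ) (hd : Differentiable ℂ g) (hp : ∀ z, g (z + 1) = g z) (y : ℝ) :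
    (∫ x in (0:ℝ)..1, g (x + y * I)) = ∫ x in (0:ℝ)..1, g x := by
  have H := Complex.integral_boundary_rect_eq_zero_of_differentiableOn g 0
    (1 + y * I) (hd.differentiableOn)
  norm_num at H
  have hv : (∫ x : ℝ in (0:ℝ)..y, g (1 + x * I)) = ∫ x : ℝ in (0:ℝ)..y, g (x * I) := by
    refine intervalIntegral.integral_congr fun t _ => ?_
    rw [show (1:ℂ) + t * I = (t * I) + 1 by ring, hp]
  rw [hv] at H
  linear_combination -H

lemma shift_contour (g : ℂ → ℂ) (hd : Differentiable ℂ g) (hp : ∀ z, g (z + 1) = g z) (w : ℂ) :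
    (∫ x in (0:ℝ)..1, g (x + w)) = ∫ x in (0:ℝ)..1, g x := by
  set G : ℝ → ℂ := fun t : ℝ => g (t + w.im * I) with hG
  have hGper : Function.Periodic G 1 := by
    intro t
    simp only [hG]
    rw [show ((t + 1 : ℝ) : ℂ) + w.im * I = ((t:ℝ) + w.im * I) + 1 by push_cast; ring, hp]
  have h1 : (∫ x in (0:ℝ)..1, g (x + w)) = ∫ x in (0:ℝ)..1, G (x + w.re) := by
    refine intervalIntegral.integral_congr fun x _ => ?_
    simp only [hG]
    rw [show ((x + w.re : ℝ) : ℂ) + w.im * I = (x:ℝ) + (w.re + w.im * I) by push_cast; ring,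
      Complex.re_add_im]
  have h2 : (∫ x in (0:ℝ)..1, G (x + w.re)) = ∫ x in (0:ℝ)+w.re..(1:ℝ)+w.re, G x :=
    intervalIntegral.integral_comp_add_right G w.re
  have h3 : (∫ x in (0:ℝ)+w.re..(1:ℝ)+w.re, G x) = ∫ x in w.re..w.re+1, G x := by
    rw [zero_add, add_comm (1:ℝ)]
  have h4 : (∫ x in w.re..w.re+1, G x) = ∫ x in (0:ℝ)..(0:ℝ)+1, G x :=
    hGper.intervalIntegral_add_eq w.re 0
  rw [h1, h2, h3, h4, zero_add]
  exact shift_vert g hd hp w.im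

lemma exp_neg_two_pi_I_int (n : ℤ) : Complex.exp (-2 * Real.pi * I * n) = 1 := by
  have h := Complex.exp_int_mul_two_pi_mul_I (-n)
  push_cast at h
  rw [← h]
  congr 1
  ring

lemma fc_rec {τ : ℂ} {k : ℕ} {f : ℂ → ℂ} (hd : Differentiable ℂ f)
    (hp : ∀ z, f (z + 1) = f z)
    (hq : ∀ z, f (z + τ) = Complex.exp (-2 * Real.pi * I * k * z - Real.pi * I * k * τ) * f z)
    (n : ℤ) :
    fc f (n + k) = Complex.exp (Real.pi * I * k * τ + 2 * Real.pi * I * n * τ) * fc f n := by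
  set g : ℂ → ℂ := fun z => f z * Complex.exp (-2 * Real.pi * I * n * z) with hg
  have hgd : Differentiable ℂ g := hd.mul (Differentiable.cexp (by fun_prop))
  have hgp : ∀ z, g (z + 1) = g z := by
    intro z
    simp only [hg, hp z]
    congr 1
    rw [show -2 * (Real.pi:ℂ) * I * n * (z+1) = -2*Real.pi*I*n*z + -2*Real.pi*I*n by ring,
      Complex.exp_add, exp_neg_two_pi_I_int, mul_one]
  have key : (∫ x in (0:ℝ)..1, g (x + τ)) = fc f n := shift_contour g hgd hgp τ
  have expand : ∀ x : ℝ, g ((x:ℂ) + τ) =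
      Complex.exp (-Real.pi * I * k * τ - 2 * Real.pi * I * n * τ) *
        (f x * Complex.exp (-2 * Real.pi * I * (n + k : ℤ) * x)) := by
    intro x
    simp only [hg, hq ((x:ℂ))]
    have e1 : ∀ A B : ℂ, Complex.exp A * f x * Complex.exp B = f x * Complex.exp (A + B) := by
      intro A B; rw [Complex.exp_add]; ring
    have e2 : ∀ C D : ℂ, Complex.exp C * (f x * Complex.exp D) = f x * Complex.exp (C + D) := by
      intro C D; rw [Complex.exp_add]; ring
    rw [e1, e2]
    congr 1
    push_cast
    ring
  rw [intervalIntegral.integral_congr (fun x _ => expand x),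
    intervalIntegral.integral_const_mul] at key
  have h5 : Complex.exp (-Real.pi * I * k * τ - 2 * Real.pi * I * n * τ) * fc f (n + k) = fc f n :=
    key
  rw [← h5, ← mul_assoc, ← Complex.exp_add]
  rw [show (Real.pi:ℂ) * I * k * τ + 2*Real.pi*I*n*τ + (-Real.pi * I * k * τ - 2*Real.pi*I*n*τ)
      = 0 by ring, Complex.exp_zero, one_mul]

lemma fc_thetaA {τ : ℂ} (hτ : 0 < τ.im) {k : ℕ} (hk : 0 < k) (a : ZMod k) (n : ℤ) :
    fc (thetaA τ k a) n =
      Complex.exp (Real.pi * I * (n:ℂ)^2 * (τ/k) - 2 * Real.pi * I * n * ((a.val:ℂ)/k)) := by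
  have ht : 0 < (τ / (k:ℂ)).im := im_div_k hτ hk
  set C : ℤ → ℂ := fun m =>
    Complex.exp (Real.pi * I * (m:ℂ)^2 * (τ/k) - 2 * Real.pi * I * m * ((a.val:ℂ)/k)) with hC
  set F : ℤ → ℝ → ℂ := fun m x =>
    C m * Complex.exp (((2 * Real.pi * ((m:ℝ) - (n:ℝ)) * x : ℝ) : ℂ) * I) with hF
  have hpt : ∀ x : ℝ, thetaA τ k a x * Complex.exp (-2 * Real.pi * I * n * x)
      = ∑' m : ℤ, F m x := by
    intro x
    rw [thetaA, ← tsum_mul_right]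
    refine tsum_congr fun m => ?_
    simp only [hF, hC, ← Complex.exp_add]
    congr 1
    push_cast
    ring
  have hnorm : ∀ (m : ℤ) (x : ℝ), ‖F m x‖ = Real.exp (-Real.pi * ((τ/k).im * m^2)) := by
    intro m x
    have h2 : ‖Complex.exp (((2 * Real.pi * ((m:ℝ) - (n:ℝ)) * x : ℝ) : ℂ) * I)‖ = 1 :=
      Complex.norm_exp_ofReal_mul_I _
    rw [hF]
    simp only [norm_mul, h2, mul_one, hC, Complex.norm_exp]
    congr 1
    have hm : ((m:ℂ)) = ((m:ℝ):ℂ) := by push_cast; ring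
    have ha : ((a.val:ℂ)/(k:ℂ)) = (((a.val:ℝ)/(k:ℝ) : ℝ) : ℂ) := by push_cast; ring
    rw [hm, ha]
    simp only [Complex.sub_re, Complex.mul_re, Complex.mul_im, Complex.I_re, Complex.I_im,
      Complex.ofReal_re, Complex.ofReal_im, ← Complex.ofReal_pow, Complex.re_ofNat,
      Complex.im_ofNat]
    ring
  have hsum : Summable (fun m : ℤ => Real.exp (-Real.pi * ((τ/k).im * m^2))) := by
    have := summable_pow_mul_jacobiTheta₂_term_bound 0 ht 0
    refine this.congr fun m => ?_
    simp
  have hFc : ∀ m : ℤ, Continuous (F m) := by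
    intro m
    exact continuous_const.mul (Complex.continuous_exp.comp (by fun_prop))
  have hint : ∀ m : ℤ, Integrable (F m) (volume.restrict (Set.Ioc (0:ℝ) 1)) := fun m =>
    (hFc m).integrableOn_Ioc
  have hnormint : ∀ m : ℤ, (∫ x in Set.Ioc (0:ℝ) 1, ‖F m x‖)
      = Real.exp (-Real.pi * ((τ/k).im * m^2)) := by
    intro m
    rw [setIntegral_congr_fun measurableSet_Ioc (fun x _ => hnorm m x)]
    simp
  have key := hasSum_integral_of_summable_integral_norm (μ := volume.restrict (Set.Ioc (0:ℝ) 1))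
    hint (by rw [funext hnormint]; exact hsum)
  have hfc : (∫ x in Set.Ioc (0:ℝ) 1, (∑' m : ℤ, F m x)) = fc (thetaA τ k a) n := by
    rw [fc, intervalIntegral.integral_of_le zero_le_one]
    exact setIntegral_congr_fun measurableSet_Ioc fun x _ => (hpt x).symm
  rw [hfc] at key
  have hterm : ∀ m : ℤ, (∫ x in Set.Ioc (0:ℝ) 1, F m x) = if m = n then C n else 0 := by
    intro m
    rw [← intervalIntegral.integral_of_le zero_le_one]
    by_cases hmn : m = n
    · subst hmn
      simp only [hF]
      norm_num
    · have hc : ((2 * Real.pi * ((m:ℝ) - (n:ℝ)) : ℝ) : ℂ) * I ≠ 0 := by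
        simp only [ne_eq, mul_eq_zero, Complex.I_ne_zero, or_false, Complex.ofReal_eq_zero]
        intro h
        rcases h with (h | h) | h
        · norm_num at h
        · exact Real.pi_ne_zero h
        · have : (m:ℝ) = n := by linarith
          exact hmn (by exact_mod_cast this)
      have heq : ∀ x : ℝ, F m x
          = C m * Complex.exp ((((2 * Real.pi * ((m:ℝ) - (n:ℝ)) : ℝ) : ℂ) * I) * x) := by
        intro x
        simp only [hF]
        congr 2
        push_cast
        ring
      rw [intervalIntegral.integral_congr fun x _ => heq x,
        intervalIntegral.integral_const_mul, integral_exp_mul_complex hc]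
      have h1 : Complex.exp ((((2 * Real.pi * ((m:ℝ) - (n:ℝ)) : ℝ) : ℂ) * I)) = 1 := by
        rw [show (((2 * Real.pi * ((m:ℝ) - (n:ℝ)) : ℝ) : ℂ) * I)
            = ((m - n : ℤ):ℂ) * (2 * Real.pi * I) by push_cast; ring]
        exact Complex.exp_int_mul_two_pi_mul_I (m - n)
      rw [if_neg hmn, Complex.ofReal_one, Complex.ofReal_zero, mul_one, mul_zero,
        Complex.exp_zero, h1, sub_self, zero_div, mul_zero]
  rw [funext hterm] at key
  have h6 : fc (thetaA τ k a) n = C n := ((hasSum_ite_eq n (C n)).unique key).symm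
  rw [h6]

lemma eq_zero_of_fc_zero (f : ℂ → ℂ) (hd : Differentiable ℂ f) (hp : ∀ z, f (z + 1) = f z)
    (h : ∀ n : ℤ, fc f n = 0) : f = 0 := by
  haveI : Fact ((0:ℝ) < 1) := ⟨one_pos⟩
  set fr : ℝ → ℂ := fun x => f x with hfr
  have hfrc : Continuous fr := (hd.continuous).comp Complex.continuous_ofReal
  have hper : fr 0 = fr 1 := by
    show f ((0:ℝ):ℂ) = f ((1:ℝ):ℂ)
    push_cast
    rw [show (1:ℂ) = 0 + 1 by ring, hp]
  set F : C(AddCircle (1:ℝ), ℂ) :=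
    ⟨AddCircle.liftIco 1 0 fr, AddCircle.liftIco_zero_continuous hper hfrc.continuousOn⟩ with hF
  have hcoeff : ∀ n : ℤ, fourierCoeff (⇑F) n = fc f n := by
    intro n
    have h1 : fourierCoeff (AddCircle.liftIco 1 0 fr) n =
        fourierCoeffOn (by norm_num : (0:ℝ) < 0 + 1) fr n := fourierCoeff_liftIco_eq fr n
    have h2 : fourierCoeffOn (by norm_num : (0:ℝ) < 0 + 1) fr n =
        (1 / ((0:ℝ) + 1 - 0)) • ∫ x in (0:ℝ)..(0+1),
          (fourier (-n) (x : AddCircle ((0:ℝ)+1-0))) • fr x := fourierCoeffOn_eq_integral fr n _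
    rw [hF]
    simp only [ContinuousMap.coe_mk]
    rw [h1, h2]
    norm_num
    rw [fc]
    refine intervalIntegral.integral_congr fun x _ => ?_
    rw [mul_comm]
    congr 1
    rw [← Complex.exp_conj]
    congr 1
    simp only [map_mul, Complex.conj_I, Complex.conj_ofReal, map_ofNat, map_intCast]
    ring
  have hFzero : ∀ x : AddCircle (1:ℝ), F x = 0 := by
    intro x
    have hsummable : Summable (fourierCoeff (⇑F)) := by
      refine summable_of_ne_finset_zero (s := ∅) fun n _ => ?_
      rw [hcoeff n, h n]
    have hps := has_pointwise_sum_fourier_series_of_summable hsummable x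
    have hzero : HasSum (fun i : ℤ => fourierCoeff (⇑F) i • fourier i x) 0 := by
      refine hasSum_zero.congr_fun fun i => ?_
      rw [hcoeff i, h i, zero_smul]
    exact (hzero.unique hps).symm
  have hIco : ∀ x : ℝ, x ∈ Set.Ico (0:ℝ) 1 → f x = 0 := by
    intro x hx
    have h3 := AddCircle.liftIco_zero_coe_apply (f := fr) hx
    have h4 : fr x = 0 := by rw [← h3]; exact hFzero x
    exact h4
  have hA : AnalyticOnNhd ℂ f Set.univ := by
    rw [analyticOnNhd_univ_iff_differentiable]; exact hd
  have hfreq : ∃ᶠ z in nhdsWithin (0:ℂ) {(0:ℂ)}ᶜ, f z = 0 := by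
    have htend : Tendsto (fun j : ℕ => ((1/(j:ℝ) : ℝ) : ℂ)) atTop (nhdsWithin 0 {(0:ℂ)}ᶜ) := by
      refine tendsto_nhdsWithin_of_tendsto_nhds_of_eventually_within _ ?_ ?_
      · have h5 := tendsto_one_div_atTop_nhds_zero_nat (𝕜 := ℝ)
        have h2 := (Complex.continuous_ofReal.tendsto 0).comp h5
        have h3 : ((0:ℝ):ℂ) = 0 := by norm_num
        rw [h3] at h2
        exact h2.congr fun j => by simp [Function.comp]
      · filter_upwards [eventually_ge_atTop 1] with j hj
        simp only [Set.mem_compl_iff, Set.mem_singleton_iff, Complex.ofReal_eq_zero]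
        positivity
    refine htend.frequently ?_
    refine Eventually.frequently ?_
    filter_upwards [eventually_ge_atTop 2] with j hj
    refine hIco _ ⟨by positivity, ?_⟩
    rw [div_lt_one (by positivity : (0:ℝ) < (j:ℝ))]
    exact_mod_cast Nat.lt_of_lt_of_le Nat.one_lt_two hj
  have heq := hA.eqOn_zero_of_preconnected_of_frequently_eq_zero isPreconnected_univ
    (Set.mem_univ 0) hfreq
  funext z
  exact heq (Set.mem_univ z)

end FourierCoefficientsOnLine

section Characters

lemma zmod_char_apply {k : ℕ} [NeZero k] (x b : ZMod k) :
    (AddChar.circleEquivComplex (AddChar.zmod k x)) b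
      = Complex.exp (2 * Real.pi * I * (x.val:ℂ) * (b.val:ℂ) / k) := by
  have hx : (((x.val:ℤ) : ZMod k)) = x := by
    push_cast
    exact ZMod.natCast_rightInverse x
  have hb : (((b.val:ℤ) : ZMod k)) = b := by
    push_cast
    exact ZMod.natCast_rightInverse b
  have h := AddChar.zmod_intCast k (x.val:ℤ) (b.val:ℤ)
  rw [hx, hb] at h
  have h2 : ((AddChar.circleEquivComplex (AddChar.zmod k x)) b : ℂ)
      = ((AddChar.zmod k x b : Circle) : ℂ) := rfl
  rw [h2, h, Circle.coe_exp]
  push_cast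
  congr 1
  ring

lemma span_w_top (k : ℕ) (hk : 0 < k) :
    Submodule.span ℂ (Set.range (fun a : ZMod k => fun b : ZMod k =>
      Complex.exp (-2 * Real.pi * I * (b.val:ℂ) * ((a.val:ℂ)/k)))) = ⊤ := by
  haveI : NeZero k := ⟨hk.ne'⟩
  set w : ZMod k → (ZMod k → ℂ) := fun a b =>
    Complex.exp (-2 * Real.pi * I * (b.val:ℂ) * ((a.val:ℂ)/k)) with hw
  have hchar : ∀ ψ : AddChar (ZMod k) ℂ, ∃ a : ZMod k, w a = ⇑ψ := by
    intro ψ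
    obtain ⟨x, hxψ⟩ := AddChar.zmodAddEquiv.surjective ψ
    refine ⟨-x, ?_⟩
    funext b
    rw [← hxψ]
    rw [AddChar.zmodAddEquiv_apply, zmod_char_apply]
    simp only [hw]
    by_cases hx0 : x = 0
    · subst hx0
      simp
    · rw [ZMod.neg_val, if_neg hx0]
      have hxk : x.val ≤ k := (ZMod.val_lt x).le
      have hvk : ((k - x.val : ℕ) : ℂ) = (k:ℂ) - (x.val:ℂ) := by
        push_cast [hxk]
        ring
      rw [hvk]
      have hkc : ((k:ℂ)) ≠ 0 := Nat.cast_ne_zero.mpr (NeZero.ne k)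
      rw [show -2 * (Real.pi:ℂ) * I * (b.val:ℂ) * (((k:ℂ) - (x.val:ℂ)) / k)
          = 2 * Real.pi * I * (x.val:ℂ) * (b.val:ℂ) / k
            + ((-(b.val:ℤ) : ℤ) : ℂ) * (2 * Real.pi * I) by
        push_cast
        field_simp
        ring]
      rw [Complex.exp_add, Complex.exp_int_mul_two_pi_mul_I, mul_one]
  have hspanchar : Submodule.span ℂ
      (Set.range ((⇑) : AddChar (ZMod k) ℂ → (ZMod k → ℂ))) = ⊤ := by
    have h := (AddChar.complexBasis (ZMod k)).span_eq
    rwa [AddChar.coe_complexBasis] at h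
  rw [← top_le_iff, ← hspanchar]
  refine Submodule.span_le.mpr ?_
  rintro _ ⟨ψ, rfl⟩
  obtain ⟨a, ha⟩ := hchar ψ
  rw [← ha]
  exact Submodule.subset_span ⟨a, rfl⟩

lemma span_v_top (τ : ℂ) (k : ℕ) (hk : 0 < k) :
    Submodule.span ℂ (Set.range (fun a : ZMod k => fun b : ZMod k =>
      Complex.exp (Real.pi * I * (b.val:ℂ)^2 * (τ/k)
        - 2 * Real.pi * I * (b.val:ℂ) * ((a.val:ℂ)/k)))) = ⊤ := by
  set w : ZMod k → (ZMod k → ℂ) := fun a b =>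
    Complex.exp (-2 * Real.pi * I * (b.val:ℂ) * ((a.val:ℂ)/k)) with hw
  set v : ZMod k → (ZMod k → ℂ) := fun a b =>
    Complex.exp (Real.pi * I * (b.val:ℂ)^2 * (τ/k)
      - 2 * Real.pi * I * (b.val:ℂ) * ((a.val:ℂ)/k)) with hv
  set d : ZMod k → ℂ := fun b => Complex.exp (Real.pi * I * (b.val:ℂ)^2 * (τ/k)) with hd
  have hdne : ∀ b, d b ≠ 0 := fun b => Complex.exp_ne_zero _
  set D : (ZMod k → ℂ) ≃ₗ[ℂ] (ZMod k → ℂ) :=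
    LinearEquiv.piCongrRight (fun b => LinearEquiv.smulOfNeZero ℂ ℂ (d b) (hdne b)) with hD
  have hDw : ∀ a, D (w a) = v a := by
    intro a
    funext b
    show d b • w a b = v a b
    simp only [hw, hv, hd, smul_eq_mul, ← Complex.exp_add]
    congr 1
    ring
  have himg : D '' Set.range w = Set.range v := by
    rw [← Set.range_comp]
    apply congrArg
    funext a
    exact hDw a
  calc Submodule.span ℂ (Set.range v) = Submodule.span ℂ (D '' Set.range w) := by rw [himg]
    _ = Submodule.map (D : (ZMod k → ℂ) →ₗ[ℂ] (ZMod k → ℂ)) (Submodule.span ℂ (Set.range w)) :=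
        (Submodule.map_span _ _).symm
    _ = ⊤ := by
        rw [span_w_top k hk, Submodule.map_top, LinearEquiv.range]

end Characters

/-! ### Main theorem -/

/-- `V_k` is spanned by the theta functions `θ_a`, `a ∈ ℤ/kℤ`,
and has dimension `k`. -/
theorem Vk_span_and_dim (τ : ℂ) (hτ : 0 < τ.im) (k : ℕ) (hk : 0 < k) :
    Vk τ k = Submodule.span ℂ (Set.range (thetaA τ k)) ∧
    Module.finrank ℂ (Vk τ k) = k := by
  haveI : NeZero k := ⟨hk.ne'⟩
  -- membership of the theta functions
  have hmem : ∀ a : ZMod k, thetaA τ k a ∈ Vk τ k := fun a =>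
    ⟨thetaA_differentiable hτ hk a, thetaA_periodic τ k a, thetaA_quasiperiodic hk a⟩
  -- continuity of elements of Vk along the real line
  have hcont : ∀ f : Vk τ k, Continuous (fun x : ℝ => (f : ℂ → ℂ) x *
      Complex.exp (-2 * Real.pi * I * ((0:ℤ)) * x)) := by
    intro f
    exact ((f.2.1.continuous).comp Complex.continuous_ofReal).mul
      (Complex.continuous_exp.comp (by fun_prop))
  have hii : ∀ (f : Vk τ k) (n : ℤ), IntervalIntegrable
      (fun x : ℝ => (f : ℂ → ℂ) x * Complex.exp (-2 * Real.pi * I * n * x)) volume 0 1 := by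
    intro f n
    exact (((f.2.1.continuous).comp Complex.continuous_ofReal).mul
      (Complex.continuous_exp.comp (by fun_prop))).intervalIntegrable 0 1
  -- the linear map to Fourier coefficients 0, …, k-1
  set Φ : (Vk τ k) →ₗ[ℂ] (ZMod k → ℂ) :=
    { toFun := fun f => fun b => fc (f : ℂ → ℂ) ((b.val : ℤ))
      map_add' := by
        intro f g
        funext b
        show fc ((f : ℂ → ℂ) + (g : ℂ → ℂ)) _ = fc (f : ℂ → ℂ) _ + fc (g : ℂ → ℂ) _
        rw [fc, fc, fc, ← intervalIntegral.integral_add (hii f _) (hii g _)]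
        refine intervalIntegral.integral_congr fun x _ => ?_
        simp [add_mul]
      map_smul' := by
        intro c f
        funext b
        show fc (c • (f : ℂ → ℂ)) _ = c * fc (f : ℂ → ℂ) _
        rw [fc, fc, ← intervalIntegral.integral_const_mul]
        refine intervalIntegral.integral_congr fun x _ => ?_
        simp [mul_assoc] } with hΦ
  -- injectivity of Φ
  have hinj : Function.Injective Φ := by
    rw [← LinearMap.ker_eq_bot, LinearMap.ker_eq_bot']
    intro f hf
    obtain ⟨f, hd, hp, hq⟩ := f
    have h0 : ∀ b : ZMod k, fc f ((b.val : ℤ)) = 0 := fun b => congrFun hf b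
    have hres : ∀ r : ℤ, 0 ≤ r → r < k → fc f r = 0 := by
      intro r h0r hrk
      have hb := ZMod.val_intCast (n := k) r
      rw [Int.emod_eq_of_lt h0r hrk] at hb
      have := h0 ((r : ZMod k))
      rwa [hb] at this
    have hall : ∀ q : ℤ, ∀ r : ℤ, 0 ≤ r → r < k → fc f (r + q * k) = 0 := by
      intro q
      induction q using Int.induction_on with
      | zero => intro r h0r hrk; rw [zero_mul, add_zero]; exact hres r h0r hrk
      | succ q ih =>
        intro r h0r hrk
        rw [show r + ((q:ℤ)+1) * k = (r + q * k) + k by ring, fc_rec hd hp hq,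
          ih r h0r hrk, mul_zero]
      | pred q ih =>
        intro r h0r hrk
        have h2 := fc_rec hd hp hq (r + (-(q:ℤ)-1) * k)
        rw [show (r + (-(q:ℤ)-1) * k) + k = r + (-(q:ℤ)) * k by ring, ih r h0r hrk] at h2
        have h3 := h2.symm
        rcases mul_eq_zero.mp h3 with h4 | h4
        · exact absurd h4 (Complex.exp_ne_zero _)
        · exact h4
    have hzero : ∀ n : ℤ, fc f n = 0 := by
      intro n
      have h5 : n % k + (n / k) * k = n := by
        rw [mul_comm]
        exact Int.emod_add_mul_ediv n k
      rw [← h5]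
      exact hall (n / k) (n % k) (Int.emod_nonneg n (by exact_mod_cast hk.ne'))
        (by
          have := Int.emod_lt_of_pos n (b := k) (by exact_mod_cast hk)
          exact this)
    have : f = 0 := eq_zero_of_fc_zero f hd hp hzero
    exact Subtype.ext this
  -- image of the theta functions under Φ
  set Θ : ZMod k → (Vk τ k) := fun a => ⟨thetaA τ k a, hmem a⟩ with hΘ
  have hΦΘ : ∀ a : ZMod k, Φ (Θ a) = fun b : ZMod k =>
      Complex.exp (Real.pi * I * (b.val:ℂ)^2 * (τ/k)
        - 2 * Real.pi * I * (b.val:ℂ) * ((a.val:ℂ)/k)) := by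
    intro a
    funext b
    show fc (thetaA τ k a) ((b.val : ℤ)) = _
    rw [fc_thetaA hτ hk a ((b.val : ℤ))]
    push_cast
    ring_nf
  -- the span of the Θ's inside Vk
  set W' : Submodule ℂ (Vk τ k) := Submodule.span ℂ (Set.range Θ) with hW'
  have hmapW' : Submodule.map Φ W' = ⊤ := by
    rw [hW', Submodule.map_span, ← Set.range_comp]
    have : (⇑Φ ∘ Θ) = fun a : ZMod k => fun b : ZMod k =>
        Complex.exp (Real.pi * I * (b.val:ℂ)^2 * (τ/k)
          - 2 * Real.pi * I * (b.val:ℂ) * ((a.val:ℂ)/k)) := by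
      funext a
      exact hΦΘ a
    rw [this]
    exact span_v_top τ k hk
  have hW'top : W' = ⊤ := by
    rw [eq_top_iff]
    intro x _
    have hx : Φ x ∈ Submodule.map Φ W' := by rw [hmapW']; trivial
    obtain ⟨y, hyW, hyx⟩ := hx
    rwa [← hinj hyx]
  -- surjectivity of Φ
  have hsurj : Function.Surjective Φ := by
    intro u
    have : u ∈ Submodule.map Φ W' := by rw [hmapW']; trivial
    obtain ⟨y, _, hyu⟩ := this
    exact ⟨y, hyu⟩
  constructor
  · -- Vk = span of theta functions
    apply le_antisymm
    · intro f hf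
      have hfW' : (⟨f, hf⟩ : Vk τ k) ∈ W' := by rw [hW'top]; trivial
      have himg : f ∈ Submodule.map (Vk τ k).subtype W' :=
        ⟨⟨f, hf⟩, hfW', rfl⟩
      rw [hW', Submodule.map_span, ← Set.range_comp] at himg
      have hcomp : ((Vk τ k).subtype ∘ Θ) = thetaA τ k := by
        funext a
        rfl
      rwa [hcomp] at himg
    · rw [Submodule.span_le]
      rintro _ ⟨a, rfl⟩
      exact hmem a
  · -- dimension
    have e : (Vk τ k) ≃ₗ[ℂ] (ZMod k → ℂ) := LinearEquiv.ofBijective Φ ⟨hinj, hsurj⟩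
    rw [e.finrank_eq]
    rw [Module.finrank_fintype_fun_eq_card, ZMod.card]
end

section
/- If a K-operator K(ξ) satisfies the boundary Yang–Baxter equation with the R-operator R(ξ), then the conjugated operator K_k(ξ) = T_k(ξ+ν)·K(ξ)·T_k(ξ−ν), together with the modified R-operator R_k(ξ₁₂) = (T_k(ξ₁−μ)⁻¹⊗T_k(ξ₂)⁻¹)·R(ξ₁₂)·(T_k(ξ₁)⊗T_k(ξ₂−μ)), also satisfies the boundary Yang–Baxter equation, where T_k(ξ)f(z) = f(z−ξ/k). -/
open Complex

/-- Translation operator `T_k(ξ)f(z) = f(z − ξ/k)` on functions of one variable. -/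
noncomputable def Tk (k : ℕ) (ξ : ℂ) (f : ℂ → ℂ) : ℂ → ℂ := fun z => f (z - ξ / k)

/-- The tensor product `T_k(ξ) ⊗ T_k(η)` on functions of two variables. -/
noncomputable def Tk2 (k : ℕ) (ξ η : ℂ) (f : ℂ → ℂ → ℂ) : ℂ → ℂ → ℂ :=
  fun z1 z2 => f (z1 - ξ / k) (z2 - η / k)

/-- Swap of the two variables (permutation operator P). -/
def swapOp (f : ℂ → ℂ → ℂ) : ℂ → ℂ → ℂ := fun z1 z2 => f z2 z1

/-- From an R-operator family `R(ξ)` obtain `R₂₁(ξ) = P ∘ R(ξ) ∘ P`. -/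
def R21of (R : ℂ → (ℂ → ℂ → ℂ) → (ℂ → ℂ → ℂ)) (ξ : ℂ) (f : ℂ → ℂ → ℂ) : ℂ → ℂ → ℂ :=
  swapOp (R ξ (swapOp f))

/-- `K(ξ) ⊗ 1`: a one-variable operator acting on the first variable. -/
def KL (K : ℂ → (ℂ → ℂ) → (ℂ → ℂ)) (ξ : ℂ) (f : ℂ → ℂ → ℂ) : ℂ → ℂ → ℂ :=
  fun z1 z2 => K ξ (fun w => f w z2) z1

/-- `1 ⊗ K(ξ)`: a one-variable operator acting on the second variable. -/
def KR (K : ℂ → (ℂ → ℂ) → (ℂ → ℂ)) (ξ : ℂ) (f : ℂ → ℂ → ℂ) : ℂ → ℂ → ℂ :=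
  fun z1 z2 => K ξ (fun w => f z1 w) z2

/-- The modified K-operator `K_k(ξ) = T_k(ξ+ν) K(ξ) T_k(ξ−ν)`. -/
noncomputable def Kkof (k : ℕ) (ν : ℂ) (K : ℂ → (ℂ → ℂ) → (ℂ → ℂ)) (ξ : ℂ) (f : ℂ → ℂ) : ℂ → ℂ :=
  Tk k (ξ + ν) (K ξ (Tk k (ξ - ν) f))

/-- The modified R-operator
`R_k(ξ₁₂) = (T_k(ξ₁−μ)⁻¹ ⊗ T_k(ξ₂)⁻¹) R(ξ₁₂) (T_k(ξ₁) ⊗ T_k(ξ₂−μ))`;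
since `R` depends only on the difference of the spectral parameters and commutes with
`T_k(η) ⊗ T_k(η)`, this is independent of the representative `(ξ₁, ξ₂)` with
`ξ₁ − ξ₂ = ξ`, and we take `ξ₁ = ξ`, `ξ₂ = 0` (noting `T_k(η)⁻¹ = T_k(−η)`). -/
noncomputable def Rkof (k : ℕ) (μ : ℂ) (R : ℂ → (ℂ → ℂ → ℂ) → (ℂ → ℂ → ℂ)) (ξ : ℂ)
    (f : ℂ → ℂ → ℂ) : ℂ → ℂ → ℂ :=
  Tk2 k (μ - ξ) 0 (R ξ (Tk2 k ξ (-μ) f))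

lemma Tk2_comp (k : ℕ) (a b c d : ℂ) (f : ℂ → ℂ → ℂ) :
    Tk2 k a b (Tk2 k c d f) = Tk2 k (a + c) (b + d) f := by
  funext z1 z2
  simp only [Tk2]
  congr 1 <;> ring

lemma Tk2_congr (k : ℕ) {a a' b b' : ℂ} (ha : a = a') (hb : b = b') (f : ℂ → ℂ → ℂ) :
    Tk2 k a b f = Tk2 k a' b' f := by rw [ha, hb]

lemma KL_Tk2 (K : ℂ → (ℂ → ℂ) → (ℂ → ℂ)) (ξ : ℂ) (k : ℕ) (b : ℂ) (f : ℂ → ℂ → ℂ) :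
    KL K ξ (Tk2 k 0 b f) = Tk2 k 0 b (KL K ξ f) := by
  funext z1 z2
  simp only [KL, Tk2, zero_div, sub_zero]

lemma KR_Tk2 (K : ℂ → (ℂ → ℂ) → (ℂ → ℂ)) (ξ : ℂ) (k : ℕ) (a : ℂ) (f : ℂ → ℂ → ℂ) :
    KR K ξ (Tk2 k a 0 f) = Tk2 k a 0 (KR K ξ f) := by
  funext z1 z2
  simp only [KR, Tk2, zero_div, sub_zero]

lemma R21_Tk2 (k : ℕ) (R : ℂ → (ℂ → ℂ → ℂ) → (ℂ → ℂ → ℂ))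
    (hcomm : ∀ ξ η f, R ξ (Tk2 k η η f) = Tk2 k η η (R ξ f)) (ξ a : ℂ) (f : ℂ → ℂ → ℂ) :
    R21of R ξ (Tk2 k a a f) = Tk2 k a a (R21of R ξ f) := by
  unfold R21of
  rw [show swapOp (Tk2 k a a f) = Tk2 k a a (swapOp f) from rfl, hcomm]
  rfl

lemma KL_Kkof (k : ℕ) (ν : ℂ) (K : ℂ → (ℂ → ℂ) → (ℂ → ℂ)) (ξ : ℂ) (f : ℂ → ℂ → ℂ) :
    KL (Kkof k ν K) ξ f = Tk2 k (ξ + ν) 0 (KL K ξ (Tk2 k (ξ - ν) 0 f)) := by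
  funext z1 z2
  simp only [KL, Kkof, Tk, Tk2, zero_div, sub_zero]
  congr 1

lemma KR_Kkof (k : ℕ) (ν : ℂ) (K : ℂ → (ℂ → ℂ) → (ℂ → ℂ)) (ξ : ℂ) (f : ℂ → ℂ → ℂ) :
    KR (Kkof k ν K) ξ f = Tk2 k 0 (ξ + ν) (KR K ξ (Tk2 k 0 (ξ - ν) f)) := by
  funext z1 z2
  simp only [KR, Kkof, Tk, Tk2, zero_div, sub_zero]
  congr 1

lemma R21_Rkof (k : ℕ) (μ : ℂ) (R : ℂ → (ℂ → ℂ → ℂ) → (ℂ → ℂ → ℂ)) (ξ : ℂ) (f : ℂ → ℂ → ℂ) :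
    R21of (Rkof k μ R) ξ f = Tk2 k 0 (μ - ξ) (R21of R ξ (Tk2 k (-μ) ξ f)) := rfl

/-- if `K(ξ)` satisfies the boundary Yang–Baxter equation with `R(ξ)`,
where `R` commutes with the diagonal translations `T_k(η) ⊗ T_k(η)`, then the
conjugated operators `K_k(ξ) = T_k(ξ+ν) K(ξ) T_k(ξ−ν)` and
`R_k(ξ₁₂) = (T_k(ξ₁−μ)⁻¹⊗T_k(ξ₂)⁻¹) R(ξ₁₂) (T_k(ξ₁)⊗T_k(ξ₂−μ))`
also satisfy the boundary Yang–Baxter equation. -/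
theorem modified_boundary_YBE (k : ℕ) (hk : 0 < k) (μ ν : ℂ)
    (R : ℂ → (ℂ → ℂ → ℂ) → (ℂ → ℂ → ℂ)) (K : ℂ → (ℂ → ℂ) → (ℂ → ℂ))
    (hcomm : ∀ ξ η f, R ξ (Tk2 k η η f) = Tk2 k η η (R ξ f))
    (hbybe : ∀ ξ1 ξ2 f,
      R21of R (ξ1 - ξ2) (KL K ξ1 (R (ξ1 + ξ2) (KR K ξ2 f))) =
      KR K ξ2 (R21of R (ξ1 + ξ2) (KL K ξ1 (R (ξ1 - ξ2) f)))) :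
    ∀ ξ1 ξ2 f,
      R21of (Rkof k μ R) (ξ1 - ξ2)
          (KL (Kkof k ν K) ξ1 (Rkof k μ R (ξ1 + ξ2) (KR (Kkof k ν K) ξ2 f))) =
      KR (Kkof k ν K) ξ2
          (R21of (Rkof k μ R) (ξ1 + ξ2)
            (KL (Kkof k ν K) ξ1 (Rkof k μ R (ξ1 - ξ2) f))) := by
  intro ξ1 ξ2 f
  simp only [R21_Rkof, KL_Kkof, KR_Kkof, Rkof]
  conv_lhs =>
    rw [Tk2_comp, Tk2_comp, Tk2_comp]
    rw [Tk2_congr k (show -μ + (ξ1 + ν) = ξ1 + ν - μ by ring)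
        (show ξ1 - ξ2 + 0 = ξ1 - ξ2 by ring)]
    rw [Tk2_congr k (show ξ1 - ν + (μ - (ξ1 + ξ2)) = μ - ν - ξ2 by ring)
        (show (0:ℂ) + 0 = 0 by ring)]
    rw [Tk2_congr k (show ξ1 + ξ2 + 0 = ξ2 + ν - μ + (ξ1 + μ - ν) by ring)
        (show -μ + (ξ2 + ν) = ξ2 + ν - μ + 0 by ring)]
    rw [← Tk2_comp k (ξ2 + ν - μ) (ξ2 + ν - μ) (ξ1 + μ - ν) 0]
    rw [← KR_Tk2]
    rw [Tk2_comp k (ξ1 + μ - ν) 0 0 (ξ2 - ν)]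
    rw [Tk2_congr k (show ξ1 + μ - ν + 0 = ξ1 + μ - ν by ring)
        (show (0:ℂ) + (ξ2 - ν) = ξ2 - ν by ring)]
    rw [hcomm]
    rw [Tk2_comp k (μ - ν - ξ2) 0 (ξ2 + ν - μ) (ξ2 + ν - μ)]
    rw [Tk2_congr k (show μ - ν - ξ2 + (ξ2 + ν - μ) = 0 by ring)
        (show (0:ℂ) + (ξ2 + ν - μ) = ξ2 + ν - μ by ring)]
    rw [KL_Tk2]
    rw [Tk2_comp k (ξ1 + ν - μ) (ξ1 - ξ2) 0 (ξ2 + ν - μ)]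
    rw [Tk2_congr k (show ξ1 + ν - μ + 0 = ξ1 + ν - μ by ring)
        (show ξ1 - ξ2 + (ξ2 + ν - μ) = ξ1 + ν - μ by ring)]
    rw [R21_Tk2 k R hcomm]
    rw [Tk2_comp k 0 (μ - (ξ1 - ξ2)) (ξ1 + ν - μ) (ξ1 + ν - μ)]
    rw [Tk2_congr k (show (0:ℂ) + (ξ1 + ν - μ) = ξ1 + ν - μ by ring)
        (show μ - (ξ1 - ξ2) + (ξ1 + ν - μ) = ξ2 + ν by ring)]
  conv_rhs =>
    rw [Tk2_comp k 0 (ξ2 - ν) 0 (μ - (ξ1 + ξ2))]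
    rw [Tk2_congr k (show (0:ℂ) + 0 = 0 by ring)
        (show ξ2 - ν + (μ - (ξ1 + ξ2)) = μ - ν - ξ1 by ring)]
    rw [Tk2_comp k (-μ) (ξ1 + ξ2) (ξ1 + ν) 0]
    rw [Tk2_congr k (show -μ + (ξ1 + ν) = ξ1 + ν - μ by ring)
        (show ξ1 + ξ2 + 0 = ξ1 + ξ2 by ring)]
    rw [Tk2_comp k (ξ1 - ν) 0 (μ - (ξ1 - ξ2)) 0]
    rw [Tk2_congr k (show ξ1 - ν + (μ - (ξ1 - ξ2)) = μ - ν + ξ2 by ring)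
        (show (0:ℂ) + 0 = 0 by ring)]
    rw [Tk2_congr k (show ξ1 - ξ2 = -μ + (ξ1 - ξ2 + μ) by ring)
        (show (-μ:ℂ) = -μ + 0 by ring)]
    rw [← Tk2_comp k (-μ) (-μ) (ξ1 - ξ2 + μ) 0]
    rw [hcomm]
    rw [Tk2_comp k (μ - ν + ξ2) 0 (-μ) (-μ)]
    rw [Tk2_congr k (show μ - ν + ξ2 + -μ = 0 + (ξ2 - ν) by ring)
        (show (0:ℂ) + -μ = ν - μ - ξ2 + (ξ2 - ν) by ring)]
    rw [← Tk2_comp k 0 (ν - μ - ξ2) (ξ2 - ν) (ξ2 - ν)]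
    rw [← hcomm]
    rw [Tk2_comp k (ξ2 - ν) (ξ2 - ν) (ξ1 - ξ2 + μ) 0]
    rw [Tk2_congr k (show ξ2 - ν + (ξ1 - ξ2 + μ) = ξ1 + μ - ν by ring)
        (show ξ2 - ν + 0 = ξ2 - ν by ring)]
    rw [KL_Tk2]
    rw [Tk2_comp k (ξ1 + ν - μ) (ξ1 + ξ2) 0 (ν - μ - ξ2)]
    rw [Tk2_congr k (show ξ1 + ν - μ + 0 = ξ1 + ν - μ by ring)
        (show ξ1 + ξ2 + (ν - μ - ξ2) = ξ1 + ν - μ by ring)]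
    rw [R21_Tk2 k R hcomm]
    rw [Tk2_comp k 0 (μ - ν - ξ1) (ξ1 + ν - μ) (ξ1 + ν - μ)]
    rw [Tk2_congr k (show (0:ℂ) + (ξ1 + ν - μ) = ξ1 + ν - μ by ring)
        (show μ - ν - ξ1 + (ξ1 + ν - μ) = 0 by ring)]
    rw [KR_Tk2]
    rw [Tk2_comp k 0 (ξ2 + ν) (ξ1 + ν - μ) 0]
    rw [Tk2_congr k (show (0:ℂ) + (ξ1 + ν - μ) = ξ1 + ν - μ by ring)
        (show ξ2 + ν + 0 = ξ2 + ν by ring)]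
  rw [hbybe]
end
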